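/- Let X be H-SLT at x₀, where H is a subgroup of π₁(X, x₀). Then X is homotopically Hausdorff relative to H if and only if H is a closed subgroup of π₁^wh(X, x₀). -/

import Mathlib

open Set TopologicalSpace unitInterval

universe u

namespace SLTF

attribute [local instance] Path.Homotopic.setoid

variable {X : Type u} [TopologicalSpace X]

/-- The homotopy class of a loop as an element of the fundamental group. -/
noncomputable def fl {x : X} (γ : Path x x) : FundamentalGroup X x :=
  (FundamentalGroup.fromPath ⟦γ⟧ : FundamentalGroup X x)

/-- Multiplication of fundamental-group elements in path-concatenation order:
`pmul a b` is the class of "`a` followed by `b`". -/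
noncomputable def pmul {x : X} (a b : FundamentalGroup X x) : FundamentalGroup X x :=
  (FundamentalGroup.fromPath
    (Path.Homotopic.Quotient.trans (FundamentalGroup.toPath a)
      (FundamentalGroup.toPath b)) : FundamentalGroup X x)

/-- A path in `X` starting at the base point `x`, recorded together with its end point. -/
structure PPath (X : Type u) [TopologicalSpace X] (x : X) where
  target : X
  path : Path x target

/-- Two paths starting at `x` are identified when they have the same end point and the
class of `α ⬝ β⁻¹` satisfies the predicate `P` (e.g. membership in a subgroup `H`). -/
def HRel (x : X) (P : Path x x → Prop) (α β : PPath X x) : Prop :=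
  ∃ h : α.target = β.target, P (α.path.trans ((β.path.cast rfl h).symm))

/-- The set `X̃` of `P`-equivalence classes of paths starting at `x`. -/
def Xtilde (x : X) (P : Path x x → Prop) : Type u := Quot (HRel x P)

/-- The class of a path in `X̃`. -/
def mkX (x : X) (P : Path x x → Prop) (α : PPath X x) : Xtilde x P := Quot.mk _ α

/-- The basic whisker-open set `([α], U)`: all classes of prolongations of `α` by a path in `U`. -/
def whBasic (x : X) (P : Path x x → Prop) (α : PPath X x) (U : Set X) : Set (Xtilde x P) :=
  { q | ∃ (y : X) (β : Path α.target y), range ⇑β ⊆ U ∧ q = mkX x P ⟨y, α.path.trans β⟩ }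

/-- The whisker topology on `X̃`, generated by the sets `([α], U)` for `U` an open
neighbourhood of the end point of `α`. -/
instance whTop (x : X) (P : Path x x → Prop) : TopologicalSpace (Xtilde x P) :=
  generateFrom
    { S | ∃ (α : PPath X x) (U : Set X), IsOpen U ∧ α.target ∈ U ∧ S = whBasic x P α U }

/-- The endpoint projection `p : X̃ → X`. -/
def endpt (x : X) (P : Path x x → Prop) : Xtilde x P → X :=
  Quot.lift (fun α => α.target) (fun _ _ h => h.elim fun e _ => e)

/-- The space of paths in `X` starting at `x`, with the compact-open topology. -/
def PSp (X : Type u) [TopologicalSpace X] (x : X) : Type u := { f : C(I, X) // f 0 = x }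

instance (x : X) : TopologicalSpace (PSp X x) := instTopologicalSpaceSubtype

/-- The natural surjection from the path space onto `X̃`. -/
def toXt (x : X) (P : Path x x → Prop) : PSp X x → Xtilde x P :=
  fun f => mkX x P ⟨f.1 1, ⟨f.1, f.2, rfl⟩⟩

/-- The quotient of the compact-open topology on `X̃`. -/
def topTop (x : X) (P : Path x x → Prop) : TopologicalSpace (Xtilde x P) :=
  coinduced (toXt x P) inferInstance

/-- Membership in a subgroup `H`, as a predicate on loops. -/
noncomputable def loopMem (x : X) (H : Subgroup (FundamentalGroup X x)) : Path x x → Prop :=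
  fun γ => fl γ ∈ H

/-- `X̃_H`, the classes of paths starting at `x₀` modulo `H`. -/
abbrev XtildeH (x₀ : X) (H : Subgroup (FundamentalGroup X x₀)) : Type u :=
  Xtilde x₀ (loopMem x₀ H)

/-- The fiber of the endpoint projection over `y`, with the subspace (whisker) topology. -/
abbrev Fib (x : X) (P : Path x x → Prop) (y : X) : Type u :=
  { q : Xtilde x P // endpt x P q = y }

/-- The class in the fiber over `y` of a path from `x` to `y`. -/
def mkFib (x : X) (P : Path x x → Prop) {y : X} (δ : Path x y) : Fib x P y :=
  ⟨mkX x P ⟨y, δ⟩, rfl⟩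

/-- The whisker topology on the fundamental group `π₁(X, x)`: basic neighbourhoods of `a`
are the sets `{a ⋆ [γ] : γ a loop in U at x}` for `U` an open neighbourhood of `x`. -/
noncomputable def whPi1 (x : X) : TopologicalSpace (FundamentalGroup X x) :=
  generateFrom
    { S | ∃ (a : FundamentalGroup X x) (U : Set X), IsOpen U ∧ x ∈ U ∧
        S = { b | ∃ γ : Path x x, range ⇑γ ⊆ U ∧ b = pmul a (fl γ) } }

/-- The quotient topology on `π₁(X, x)` induced from the loop space with the
compact-open topology. -/
noncomputable def qtopPi1 (x : X) : TopologicalSpace (FundamentalGroup X x) :=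
  coinduced (fun γ : Path x x => fl γ) inferInstance

/-- `X` is `H`-SLT at `x₀`. -/
noncomputable def IsHSLTAt (x₀ : X) (H : Subgroup (FundamentalGroup X x₀)) : Prop :=
  ∀ (y : X) (α : Path x₀ y) (U : Set X), IsOpen U → x₀ ∈ U →
    ∃ V : Set X, IsOpen V ∧ y ∈ V ∧
      ∀ β : Path y y, range ⇑β ⊆ V →
        ∃ γ : Path x₀ x₀, range ⇑γ ⊆ U ∧
          fl ((α.trans (β.trans α.symm)).trans γ.symm) ∈ H

/-- `X` is SLT at `x`. -/
def IsSLTAt (X : Type u) [TopologicalSpace X] (x : X) : Prop :=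
  ∀ (y : X) (α : Path x y) (U : Set X), IsOpen U → x ∈ U →
    ∃ V : Set X, IsOpen V ∧ y ∈ V ∧
      ∀ β : Path y y, range ⇑β ⊆ V →
        ∃ γ : Path x x, range ⇑γ ⊆ U ∧ (α.trans (β.trans α.symm)).Homotopic γ

/-- `X` is an SLT space. -/
def IsSLT (X : Type u) [TopologicalSpace X] : Prop := ∀ x : X, IsSLTAt X x

/-- `α` (a path from `x` to `y`) is an `H`-SLT path: for every path `lam` from `x₀` to `x`
and open `U ∋ x` there is an open `V ∋ y` such that every loop `β` in `V` at `y` transfers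
to a loop `γ` in `U` at `x` with `[α ⋆ β ⋆ α⁻¹ ⋆ γ⁻¹] ∈ [lam⁻¹ H lam]`, i.e.
`[lam ⋆ (α ⋆ β ⋆ α⁻¹ ⋆ γ⁻¹) ⋆ lam⁻¹] ∈ H`. -/
noncomputable def IsHSLTPath (x₀ : X) (H : Subgroup (FundamentalGroup X x₀)) {x y : X}
    (α : Path x y) : Prop :=
  ∀ (lam : Path x₀ x) (U : Set X), IsOpen U → x ∈ U →
    ∃ V : Set X, IsOpen V ∧ y ∈ V ∧
      ∀ β : Path y y, range ⇑β ⊆ V →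
        ∃ γ : Path x x, range ⇑γ ⊆ U ∧
          fl (lam.trans ((((α.trans (β.trans α.symm)).trans γ.symm)).trans lam.symm)) ∈ H

/-- `X` is an `H`-SLT space: for every `x` and every path `lam` from `x₀` to `x`, `X` is
`[lam⁻¹ H lam]`-SLT at `x`. -/
noncomputable def IsHSLTSpace (x₀ : X) (H : Subgroup (FundamentalGroup X x₀)) : Prop :=
  ∀ (x y : X) (α : Path x y), IsHSLTPath x₀ H α

/-- Membership in the conjugate subgroup `[lam⁻¹ H lam]` of `π₁(X, x)`,
as a predicate on loops at `x`. -/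
noncomputable def conjMem (x₀ : X) (H : Subgroup (FundamentalGroup X x₀)) {x : X}
    (lam : Path x₀ x) : Path x x → Prop :=
  fun δ => fl (lam.trans (δ.trans lam.symm)) ∈ H

/-- `X` is homotopically Hausdorff relative to `H`. -/
noncomputable def HomHausdorffRel (x₀ : X) (H : Subgroup (FundamentalGroup X x₀)) : Prop :=
  ∀ (y : X) (α : Path x₀ y) (g : FundamentalGroup X x₀), g ∉ H →
    ∃ U : Set X, IsOpen U ∧ y ∈ U ∧
      ∀ γ : Path y y, range ⇑γ ⊆ U →
        ¬ ∃ h ∈ H, fl (α.trans (γ.trans α.symm)) = pmul h g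

/-- `X` is homotopically path Hausdorff relative to `H`. -/
noncomputable def HomPathHausdorffRel (x₀ : X) (H : Subgroup (FundamentalGroup X x₀)) : Prop :=
  ∀ (y : X) (α β : Path x₀ y), fl (α.trans β.symm) ∉ H →
    ∃ (n : ℕ) (t : Fin (n + 1) → I) (U : Fin n → Set X),
      t 0 = 0 ∧ t (Fin.last n) = 1 ∧ StrictMono t ∧
      (∀ i : Fin n, IsOpen (U i)) ∧
      (∀ i : Fin n, ⇑α '' Set.Icc (t i.castSucc) (t i.succ) ⊆ U i) ∧
      ∀ γ : Path x₀ y,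
        (∀ i : Fin n, ⇑γ '' Set.Icc (t i.castSucc) (t i.succ) ⊆ U i) →
        (∀ i : Fin (n + 1), γ (t i) = α (t i)) →
        fl (γ.trans β.symm) ∉ H

/-- The endpoint projection `p : X̃ → X` (with the whisker topology on `X̃`) has the
unique path lifting property. -/
def UPLP (x : X) (P : Path x x → Prop) : Prop :=
  ∀ g₁ g₂ : C(I, Xtilde x P), g₁ 0 = g₂ 0 →
    (∀ t, endpt x P (g₁ t) = endpt x P (g₂ t)) → g₁ = g₂

/-- A semicovering map: a local homeomorphism with (continuous) unique lifting of paths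
and of homotopies. -/
structure IsSemicovering {Y : Type u} [TopologicalSpace Y] (p : Y → X) : Prop where
  localHomeo : IsLocalHomeomorph p
  pathLift : ∀ (y : Y) (γ : C(I, X)), γ 0 = p y →
    ∃! γh : C(I, Y), γh 0 = y ∧ ∀ t, p (γh t) = γ t
  contPathLift : ∀ y : Y, ∃ L : { γ : C(I, X) // γ 0 = p y } → C(I, Y),
    Continuous L ∧ ∀ γ, (L γ) 0 = y ∧ ∀ t, p ((L γ) t) = (γ : C(I, X)) t
  homotopyLift : ∀ (y : Y) (Φ : C(I × I, X)), Φ (0, 0) = p y →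
    ∃! Φh : C(I × I, Y), Φh (0, 0) = y ∧ ∀ z, p (Φh z) = Φ z
  contHomotopyLift : ∀ y : Y, ∃ L : { Φ : C(I × I, X) // Φ (0, 0) = p y } → C(I × I, Y),
    Continuous L ∧ ∀ Φ, (L Φ) (0, 0) = y ∧ ∀ z, p ((L Φ) z) = (Φ : C(I × I, X)) z

/-- An `lpc₀`-covering map with `p₊π₁(Y, ·) = H`: a map which is equivalent, as a map
over `X`, to the endpoint projection `p_H : X̃_H → X` having the unique path lifting
property (with `Y` path connected and locally path connected). -/
structure IsLpc0Covering {Y : Type u} [TopologicalSpace Y] (p : Y → X) (x₀ : X)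
    (H : Subgroup (FundamentalGroup X x₀)) : Prop where
  pathConnected : PathConnectedSpace Y
  locPathConnected : LocPathConnectedSpace Y
  uplp : UPLP x₀ (loopMem x₀ H)
  equiv : ∃ φ : Y ≃ₜ XtildeH x₀ H, ∀ y, endpt x₀ (loopMem x₀ H) (φ y) = p y

/-- The homomorphism induced by `p` on fundamental groups, as a function. -/
noncomputable def pStar {Y : Type u} [TopologicalSpace Y] (p : C(Y, X)) (y₀ : Y) :
    FundamentalGroup Y y₀ → FundamentalGroup X (p y₀) :=
  fun g => (FundamentalGroup.fromPath
    (Path.Homotopic.Quotient.map (FundamentalGroup.toPath g) p) : FundamentalGroup X (p y₀))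


/-! A basic whisker neighbourhood `g ⋆ [loops in U]` missing `H` is, up to inverting the loop,
exactly the homotopically Hausdorff condition along the constant path at `x₀`; so closedness of `H`
is that condition at `x₀` alone. `H`-SLT moves a small loop at the end of any path `α` back to a
small loop at `x₀` without changing its coset modulo `H`, which propagates the condition from
`x₀` to every path. -/

open Topology

section LoopClasses

variable {x : X}

theorem fl_eq_of_homotopic {p q : Path x x} (h : p.Homotopic q) : fl p = fl q :=
  congrArg FundamentalGroup.fromPath (Quotient.sound h)

-- `*` on `FundamentalGroup` is composition of morphisms, so concatenation reverses the order.
theorem pmul_eq_mul (a b : FundamentalGroup X x) : pmul a b = b * a :=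
  rfl

theorem fl_refl : fl (Path.refl x) = 1 :=
  rfl

theorem fl_trans (p q : Path x x) : fl (p.trans q) = fl q * fl p :=
  rfl

theorem fl_symm (p : Path x x) : fl p.symm = (fl p)⁻¹ := by
  have h : fl (p.trans p.symm) = fl (Path.refl x) :=
    fl_eq_of_homotopic (Path.Homotopic.symm ⟨Path.Homotopy.reflTransSymm p⟩)
  rw [fl_trans, fl_refl] at h
  exact eq_inv_of_mul_eq_one_left h

theorem fl_conj_refl (γ : Path x x) :
    fl ((Path.refl x).trans (γ.trans (Path.refl x).symm)) = fl γ := by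
  rw [Path.refl_symm]
  exact fl_eq_of_homotopic
    (Path.Homotopic.trans ⟨Path.Homotopy.reflTrans _⟩ ⟨Path.Homotopy.transRefl _⟩)

theorem exists_mem_pmul_eq_iff (H : Subgroup (FundamentalGroup X x))
    (a g : FundamentalGroup X x) : (∃ h ∈ H, a = pmul h g) ↔ g⁻¹ * a ∈ H := by
  simp only [pmul_eq_mul]
  constructor
  · rintro ⟨h, hH, rfl⟩
    rwa [inv_mul_cancel_left]
  · exact fun ha => ⟨g⁻¹ * a, ha, by group⟩

end LoopClasses

section WhiskerTopology

variable {x : X}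

def whiskerNhd (x : X) (a : FundamentalGroup X x) (U : Set X) : Set (FundamentalGroup X x) :=
  { b | ∃ γ : Path x x, range ⇑γ ⊆ U ∧ b = pmul a (fl γ) }

theorem mem_whiskerNhd_self (a : FundamentalGroup X x) {U : Set X} (hU : x ∈ U) :
    a ∈ whiskerNhd x a U :=
  ⟨Path.refl x, by simpa [Path.refl_range] using hU, by rw [pmul_eq_mul, fl_refl, one_mul]⟩

theorem whiskerNhd_mono (a : FundamentalGroup X x) {U V : Set X} (h : U ⊆ V) :
    whiskerNhd x a U ⊆ whiskerNhd x a V := by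
  rintro b ⟨γ, hγ, rfl⟩
  exact ⟨γ, hγ.trans h, rfl⟩

theorem whiskerNhd_subset_of_mem {a b : FundamentalGroup X x} {U : Set X}
    (hb : b ∈ whiskerNhd x a U) : whiskerNhd x b U ⊆ whiskerNhd x a U := by
  obtain ⟨γ, hγ, rfl⟩ := hb
  rintro c ⟨δ, hδ, rfl⟩
  refine ⟨γ.trans δ, by rw [Path.trans_range]; exact union_subset hγ hδ, ?_⟩
  simp only [pmul_eq_mul, fl_trans, mul_assoc]

theorem isOpen_whiskerNhd (a : FundamentalGroup X x) {U : Set X} (hU : IsOpen U)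
    (hx : x ∈ U) : IsOpen[whPi1 x] (whiskerNhd x a U) :=
  GenerateOpen.basic _ ⟨a, U, hU, hx, rfl⟩

theorem isOpen_whPi1_iff {O : Set (FundamentalGroup X x)} :
    IsOpen[whPi1 x] O ↔ ∀ g ∈ O, ∃ U : Set X, IsOpen U ∧ x ∈ U ∧ whiskerNhd x g U ⊆ O := by
  refine ⟨fun hO => ?_, fun h => ?_⟩
  · induction hO with
    | basic s hs =>
      obtain ⟨a, U, hU, hx, rfl⟩ := hs
      exact fun g hg => ⟨U, hU, hx, whiskerNhd_subset_of_mem hg⟩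
    | univ => exact fun _ _ => ⟨univ, isOpen_univ, mem_univ _, subset_univ _⟩
    | inter s t _ _ ihs iht =>
      intro g hg
      obtain ⟨U₁, hU₁, hx₁, hs⟩ := ihs g hg.1
      obtain ⟨U₂, hU₂, hx₂, ht⟩ := iht g hg.2
      exact ⟨U₁ ∩ U₂, hU₁.inter hU₂, ⟨hx₁, hx₂⟩,
        subset_inter ((whiskerNhd_mono g inter_subset_left).trans hs)
          ((whiskerNhd_mono g inter_subset_right).trans ht)⟩
    | sUnion 𝒮 _ ih =>
      rintro g ⟨t, ht, hg⟩
      obtain ⟨U, hU, hx, hsub⟩ := ih t ht g hg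
      exact ⟨U, hU, hx, hsub.trans (subset_sUnion_of_mem ht)⟩
  · refine (@isOpen_iff_forall_mem_open _ (whPi1 x) O).2 fun g hg => ?_
    obtain ⟨U, hU, hx, hsub⟩ := h g hg
    exact ⟨_, hsub, isOpen_whiskerNhd g hU hx, mem_whiskerNhd_self g hx⟩

theorem isClosed_whPi1_iff {S : Set (FundamentalGroup X x)} :
    IsClosed[whPi1 x] S ↔
      ∀ g ∉ S, ∃ U : Set X, IsOpen U ∧ x ∈ U ∧ ∀ γ : Path x x, range ⇑γ ⊆ U → fl γ * g ∉ S := by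
  rw [← @isOpen_compl_iff _ _ (whPi1 x), isOpen_whPi1_iff]
  refine forall₂_congr fun g _ => exists_congr fun U => and_congr_right' <| and_congr_right' ?_
  refine ⟨fun h γ hγ => h ⟨γ, hγ, rfl⟩, ?_⟩
  rintro h b ⟨γ, hγ, rfl⟩
  exact h γ hγ

end WhiskerTopology

theorem statement3_general {X : Type u} [TopologicalSpace X] (x₀ : X)
    (H : Subgroup (FundamentalGroup X x₀)) (hslt : IsHSLTAt x₀ H) :
    HomHausdorffRel x₀ H ↔ @IsClosed _ (whPi1 x₀) (H : Set (FundamentalGroup X x₀)) := by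
  rw [isClosed_whPi1_iff]
  constructor
  · intro hHaus g hg
    obtain ⟨U, hU, hx, hno⟩ := hHaus x₀ (Path.refl x₀) g hg
    refine ⟨U, hU, hx, fun γ hγ hmem => hno γ.symm (by rwa [Path.symm_range]) ?_⟩
    rw [exists_mem_pmul_eq_iff, fl_conj_refl, fl_symm, ← mul_inv_rev]
    exact H.inv_mem hmem
  · intro hcl y α g hg
    obtain ⟨U, hU, hx, hno⟩ := hcl g hg
    obtain ⟨V, hV, hy, htransfer⟩ := hslt y α U hU hx
    refine ⟨V, hV, hy, fun γ hγ hcoset => ?_⟩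
    obtain ⟨δ, hδ, hmem⟩ := htransfer γ hγ
    rw [exists_mem_pmul_eq_iff] at hcoset
    rw [fl_trans, fl_symm] at hmem
    refine hno δ.symm (by rwa [Path.symm_range]) ?_
    set c := fl (α.trans (γ.trans α.symm))
    have hsplit : fl δ.symm * g = ((fl δ)⁻¹ * c) * (g⁻¹ * c)⁻¹ := by rw [fl_symm]; group
    exact hsplit ▸ H.mul_mem hmem (H.inv_mem hcoset)

/-- Let `X` be `H`-SLT at `x₀`, where `H` is a subgroup of `π₁(X, x₀)`.
Then `X` is homotopically Hausdorff relative to `H` if and only if `H` is a closed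
subgroup of `π₁^wh(X, x₀)`. -/
theorem statement3 {X : Type u} [TopologicalSpace X] [PathConnectedSpace X] (x₀ : X)
    (H : Subgroup (FundamentalGroup X x₀)) (hslt : IsHSLTAt x₀ H) :
    HomHausdorffRel x₀ H ↔ @IsClosed _ (whPi1 x₀) (H : Set (FundamentalGroup X x₀)) :=
  statement3_general x₀ H hslt

end SLTF
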